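/- arXiv:2310.15049 — 5 statements merged into one kernel-verified Lean document; each statement's English description precedes it below -/
import Mathlib

section
/- Let R be a commutative ring and b1, b2, b3, b4, b5 ∈ R. Then there exists a unique formal power series u ∈ R[[t]] satisfying u = t^2·(1 + b1·u + b2·u^2 + b3·u^3 + b4·u^4 + b5·u^5). Moreover, the coefficient of t^2 in u is 1, and the coefficient of t^m in u is 0 for every odd m and for m = 0. -/
open PowerSeries

/-- The power series `u` satisfies the curve equation at infinity:
`u = t² · (1 + b₁u + b₂u² + b₃u³ + b₄u⁴ + b₅u⁵)`. -/
def SatisfiesCurveEqAtInfinity {R : Type*} [CommRing R] (b1 b2 b3 b4 b5 : R)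
    (u : PowerSeries R) : Prop :=
  u = X ^ 2 * (1 + C b1 * u + C b2 * u ^ 2 + C b3 * u ^ 3
      + C b4 * u ^ 4 + C b5 * u ^ 5)

/-!
The map `u ↦ t² · f(u)`, with `f = 1 + b₁T + ⋯ + b₅T⁵`, is a contraction for the `t`-adic
metric, because `u - v` divides `f(u) - f(v)`. Its iterates starting from `0` converge
coefficientwise to the unique fixed point. The solution `v` of `v = t · f(v)` gives a solution
`v(t²)`, so by uniqueness the solution is even in `t`; its coefficients of `t⁰` and `t²` are read
off as `0` and `f(0) = 1`.
-/

namespace PowerSeries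

variable {R : Type*} [CommRing R]

theorem eq_of_forall_X_pow_dvd_sub {f g : R⟦X⟧} (h : ∀ n, (X : R⟦X⟧) ^ n ∣ f - g) : f = g := by
  ext m
  rw [← sub_eq_zero, ← map_sub]
  exact X_pow_dvd_iff.mp (h (m + 1)) m m.lt_succ_self

def IsXAdicContraction (Φ : R⟦X⟧ → R⟦X⟧) : Prop :=
  ∀ n u v, (X : R⟦X⟧) ^ n ∣ u - v → X ^ (n + 1) ∣ Φ u - Φ v

namespace IsXAdicContraction

variable {Φ : R⟦X⟧ → R⟦X⟧}

theorem eq_of_fixed {u v : R⟦X⟧} (hΦ : IsXAdicContraction Φ) (hu : Φ u = u) (hv : Φ v = v) :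
    u = v := by
  refine eq_of_forall_X_pow_dvd_sub fun n => ?_
  induction n with
  | zero => simp
  | succ n ih => simpa [hu, hv] using hΦ n u v ih

theorem X_pow_dvd_iterate_succ_sub (hΦ : IsXAdicContraction Φ) (n : ℕ) :
    (X : R⟦X⟧) ^ n ∣ Φ^[n + 1] 0 - Φ^[n] 0 := by
  induction n with
  | zero => simp
  | succ n ih => simpa only [Function.iterate_succ_apply'] using hΦ n _ _ ih

theorem X_pow_dvd_iterate_sub (hΦ : IsXAdicContraction Φ) {n m : ℕ} (h : n ≤ m) :
    (X : R⟦X⟧) ^ n ∣ Φ^[m] 0 - Φ^[n] 0 := by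
  induction m, h using Nat.le_induction with
  | base => simp
  | succ m hnm ih =>
    have := (pow_dvd_pow X hnm).trans (hΦ.X_pow_dvd_iterate_succ_sub m)
    simpa using dvd_add this ih

theorem exists_fixed (hΦ : IsXAdicContraction Φ) : ∃ u, Φ u = u := by
  -- the coefficient of `X^m` in the iterates `Φ^[n] 0` is stable from `n = m + 1` on
  set u := mk fun m => coeff m (Φ^[m + 1] 0)
  have hu : ∀ n, (X : R⟦X⟧) ^ n ∣ u - Φ^[n] 0 := fun n => X_pow_dvd_iff.mpr fun m hm => by
    have := X_pow_dvd_iff.mp (hΦ.X_pow_dvd_iterate_sub hm) m m.lt_succ_self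
    rw [map_sub, sub_eq_zero] at this ⊢
    exact (coeff_mk _ _).trans this.symm
  refine ⟨u, eq_of_forall_X_pow_dvd_sub fun n => ?_⟩
  have := dvd_sub (hΦ n _ _ (hu n)) (hu (n + 1))
  rw [Function.iterate_succ_apply', sub_sub_sub_cancel_right] at this
  exact (pow_dvd_pow X n.le_succ).trans this

theorem existsUnique_fixed (hΦ : IsXAdicContraction Φ) : ∃! u, Φ u = u :=
  let ⟨u, hu⟩ := hΦ.exists_fixed
  ⟨u, hu, fun _ hv => hΦ.eq_of_fixed hv hu⟩

end IsXAdicContraction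

theorem sub_dvd_aeval_sub (P : Polynomial R) (u v : R⟦X⟧) :
    u - v ∣ Polynomial.aeval u P - Polynomial.aeval v P := by
  simpa only [Polynomial.aeval_def, Polynomial.eval₂_eq_eval_map] using
    Polynomial.sub_dvd_eval_sub u v (P.map (algebraMap R R⟦X⟧))

theorem isXAdicContraction_X_pow_mul_aeval (P : Polynomial R) {k : ℕ} (hk : k ≠ 0) :
    IsXAdicContraction fun u : R⟦X⟧ => X ^ k * Polynomial.aeval u P := by
  intro n u v huv
  rw [← mul_sub]
  calc (X : R⟦X⟧) ^ (n + 1) ∣ X ^ k * X ^ n := by rw [← pow_add]; exact pow_dvd_pow X (by omega)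
    _ ∣ _ := mul_dvd_mul_left _ (huv.trans (sub_dvd_aeval_sub P u v))

section EqXSqMulAeval

variable {P : Polynomial R} {u : R⟦X⟧}

theorem coeff_zero_eq_zero_of_eq_X_sq_mul_aeval (hu : u = X ^ 2 * Polynomial.aeval u P) :
    coeff 0 u = 0 := by
  rw [hu, coeff_X_pow_mul', if_neg (by omega)]

theorem coeff_two_eq_of_eq_X_sq_mul_aeval (hu : u = X ^ 2 * Polynomial.aeval u P) :
    coeff 2 u = P.coeff 0 := by
  have h0 : constantCoeff u = 0 := by
    rw [← coeff_zero_eq_constantCoeff_apply, coeff_zero_eq_zero_of_eq_X_sq_mul_aeval hu]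
  rw [hu, coeff_X_pow_mul', if_pos le_rfl, Nat.sub_self, coeff_zero_eq_constantCoeff_apply,
    Polynomial.aeval_def, Polynomial.hom_eval₂, h0]
  simp [Polynomial.coeff_zero_eq_eval_zero]

/-- Arguing through `v(X²)`, for the solution `v` of `v = X · P(v)`, rather than through the
symmetry `X ↦ -X` also works in characteristic `2`. -/
theorem coeff_eq_zero_of_odd_of_eq_X_sq_mul_aeval (hu : u = X ^ 2 * Polynomial.aeval u P) {m : ℕ}
    (hm : Odd m) : coeff m u = 0 := by
  obtain ⟨v, hv⟩ := (isXAdicContraction_X_pow_mul_aeval P one_ne_zero).exists_fixed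
  have hv2 : X ^ 2 * Polynomial.aeval (expand 2 two_ne_zero v) P = expand 2 two_ne_zero v := by
    conv_rhs => rw [← hv]
    rw [map_mul, map_pow, expand_X, pow_one, ← Polynomial.aeval_algHom_apply]
  rw [(isXAdicContraction_X_pow_mul_aeval P two_ne_zero).eq_of_fixed hu.symm hv2]
  exact coeff_expand_of_not_dvd 2 two_ne_zero v
    (Nat.not_even_iff_odd.mpr hm ∘ even_iff_two_dvd.mpr)

end EqXSqMulAeval

end PowerSeries

/-- The reversal of the quintic `x⁵ + b₁x⁴ + ⋯ + b₅`. -/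
noncomputable def curveRevPoly {R : Type*} [CommRing R] (b1 b2 b3 b4 b5 : R) : Polynomial R :=
  1 + Polynomial.C b1 * Polynomial.X + Polynomial.C b2 * Polynomial.X ^ 2
    + Polynomial.C b3 * Polynomial.X ^ 3 + Polynomial.C b4 * Polynomial.X ^ 4
    + Polynomial.C b5 * Polynomial.X ^ 5

theorem satisfiesCurveEqAtInfinity_iff {R : Type*} [CommRing R] (b1 b2 b3 b4 b5 : R)
    (u : R⟦X⟧) : SatisfiesCurveEqAtInfinity b1 b2 b3 b4 b5 u ↔
      u = X ^ 2 * Polynomial.aeval u (curveRevPoly b1 b2 b3 b4 b5) := by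
  simp [SatisfiesCurveEqAtInfinity, curveRevPoly, Polynomial.aeval_C]

theorem stmt0 {R : Type*} [CommRing R] (b1 b2 b3 b4 b5 : R) :
    (∃! u : PowerSeries R, SatisfiesCurveEqAtInfinity b1 b2 b3 b4 b5 u) ∧
    ∀ u : PowerSeries R, SatisfiesCurveEqAtInfinity b1 b2 b3 b4 b5 u →
      coeff 2 u = 1 ∧ (∀ m : ℕ, Odd m → coeff m u = 0) ∧ coeff 0 u = 0 := by
  simp only [satisfiesCurveEqAtInfinity_iff]
  refine ⟨?_, fun u hu => ⟨?_, fun m => coeff_eq_zero_of_odd_of_eq_X_sq_mul_aeval hu,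
    coeff_zero_eq_zero_of_eq_X_sq_mul_aeval hu⟩⟩
  · have hΦ := isXAdicContraction_X_pow_mul_aeval (curveRevPoly b1 b2 b3 b4 b5) two_ne_zero
    simpa only [eq_comm] using hΦ.existsUnique_fixed
  · rw [coeff_two_eq_of_eq_X_sq_mul_aeval hu]
    simp [curveRevPoly]
end

section
/- Let R be a commutative ring, b1,…,b5 ∈ R, and let u ∈ R[[t]] be the unique formal power series with u = t^2·(1 + b1·u + b2·u^2 + b3·u^3 + b4·u^4 + b5·u^5). Then t·u′(t) = 2·u·(∑_{n≥0} D(n)·t^{2n}) in R[[t]], where u′ is the formal derivative of u and D(0) = 1. (This encodes the expansion x·dx/(2y) = (1 + ∑_{n≥1} D(n)·t^{2n})·dt of the differential ω2 at infinity, since x·dx/(2y) = (t/2)·du/u on the curve.) -/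
open PowerSeries Finset

/-- `D n = ∑ (n!/(k₀!k₁!k₂!k₃!k₄!k₅!)) b₁^{k₁}b₂^{k₂}b₃^{k₃}b₄^{k₄}b₅^{k₅}`, the sum over
all `(k₀,…,k₅) ∈ ℕ⁶` with `k₀+k₁+k₂+k₃+k₄+k₅ = n` and `k₁+2k₂+3k₃+4k₄+5k₅ = n`. -/
noncomputable def Dcoef {R : Type*} [CommRing R] (b1 b2 b3 b4 b5 : R) (n : ℕ) : R :=
  ∑ k ∈ (Fintype.piFinset fun _ : Fin 6 => Finset.range (n + 1)) |>.filter
      (fun k => (∑ i, k i) = n ∧ k 1 + 2 * k 2 + 3 * k 3 + 4 * k 4 + 5 * k 5 = n),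
    (Nat.multinomial Finset.univ k : R) *
      (b1 ^ k 1 * b2 ^ k 2 * b3 ^ k 3 * b4 ^ k 4 * b5 ^ k 5)

/-- The even power series `∑_{n≥0} D(n)·t^{2n}`. -/
noncomputable def DSeries {R : Type*} [CommRing R] (b1 b2 b3 b4 b5 : R) : PowerSeries R :=
  PowerSeries.mk fun m => if 2 ∣ m then Dcoef b1 b2 b3 b4 b5 (m / 2) else 0

/-!
Put `s = t²` and `φ(x) = 1 + b₁x + ⋯ + b₅x⁵`. Then `u(t) = w(t²)`, where `w` is the unique
series with `w = s·φ(w)`, and `s·w' = w · w'/φ(w)`; so it suffices that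
`[sⁿ] w'/φ(w) = [xⁿ] φ(x)ⁿ`, and the multinomial theorem identifies `[xⁿ] φ(x)ⁿ` with `D(n)`.
Expanding `φ(w)ⁿ = ∑ₖ [xᵏ]φⁿ · wᵏ` with `wᵏ = sᵏ φ(w)ᵏ` reduces this Lagrange–Bürmann identity to
`[sᵐ] w' φ(w)^-(m+1) = δₘ₀`. For `m ≥ 1` this holds because
`m · w' φ(w)^-(m+1) = m φ(w)^-m - s (φ(w)^-m)'`, whose `m`-th coefficient vanishes. That step
divides by `m`, so it is done for a generic polynomial over the torsion-free ring `ℤ[c₁, c₂, …]`;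
since `w = s·φ(w)` has exactly one solution, specialising the generic solution gives the result
over an arbitrary commutative ring.
-/

theorem Polynomial.sub_dvd_aeval_sub {A S : Type*} [CommRing A] [CommRing S] [Algebra A S]
    (x y : S) (p : Polynomial A) : x - y ∣ Polynomial.aeval x p - Polynomial.aeval y p := by
  simpa only [Polynomial.aeval_def, Polynomial.eval₂_eq_eval_map]
    using Polynomial.sub_dvd_eval_sub x y (p.map (algebraMap A S))

namespace PowerSeries
variable {A : Type*} [CommRing A]

theorem eq_zero_of_forall_X_pow_dvd {f : A⟦X⟧} (h : ∀ n, X ^ n ∣ f) : f = 0 := by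
  ext n
  exact X_pow_dvd_iff.mp (h (n + 1)) n n.lt_succ_self

section FixedPoint

variable {k : ℕ} (hk : k ≠ 0) (p : Polynomial A)
include hk

theorem X_pow_succ_dvd_X_pow_mul_aeval_sub {n : ℕ} {f g : A⟦X⟧} (h : X ^ n ∣ f - g) :
    X ^ (n + 1) ∣ X ^ k * Polynomial.aeval f p - X ^ k * Polynomial.aeval g p := by
  rw [← mul_sub, pow_succ']
  exact mul_dvd_mul (dvd_pow_self X hk) (h.trans (Polynomial.sub_dvd_aeval_sub f g p))

theorem eq_of_eq_X_pow_mul_aeval {f g : A⟦X⟧} (hf : f = X ^ k * Polynomial.aeval f p)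
    (hg : g = X ^ k * Polynomial.aeval g p) : f = g := by
  refine sub_eq_zero.mp (eq_zero_of_forall_X_pow_dvd fun n => ?_)
  induction n with
  | zero => exact one_dvd _
  | succ n ih =>
    rw [hf, hg]
    exact X_pow_succ_dvd_X_pow_mul_aeval_sub hk p ih

theorem exists_eq_X_pow_mul_aeval : ∃ f : A⟦X⟧, f = X ^ k * Polynomial.aeval f p := by
  set T : A⟦X⟧ → A⟦X⟧ := fun f => X ^ k * Polynomial.aeval f p
  set a : ℕ → A⟦X⟧ := fun n => T^[n] 0
  have ha (n : ℕ) : a (n + 1) = T (a n) := Function.iterate_succ_apply' T n 0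
  have hstep (n : ℕ) : X ^ n ∣ a (n + 1) - a n := by
    induction n with
    | zero => exact one_dvd _
    | succ n ih =>
      rw [ha n] at ih
      rw [ha (n + 1), ha n]
      exact X_pow_succ_dvd_X_pow_mul_aeval_sub hk p ih
  have hcauchy {m n : ℕ} (hmn : m ≤ n) : X ^ m ∣ a n - a m := by
    induction n, hmn using Nat.le_induction with
    | base => simp
    | succ n hmn ih =>
      rw [← sub_add_sub_cancel]
      exact dvd_add ((pow_dvd_pow X hmn).trans (hstep n)) ih
  set f := mk fun n => coeff n (a (n + 1))
  have hlim (n : ℕ) : X ^ n ∣ f - a n := by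
    refine X_pow_dvd_iff.mpr fun m hm => ?_
    have := X_pow_dvd_iff.mp (hcauchy (Nat.succ_le_of_lt hm)) m m.lt_succ_self
    simp only [map_sub, sub_eq_zero, f, coeff_mk] at this ⊢
    exact this.symm
  refine ⟨f, sub_eq_zero.mp (eq_zero_of_forall_X_pow_dvd fun n => ?_)⟩
  have hfar : X ^ n ∣ f - T (a n) := ha n ▸ (pow_dvd_pow X n.le_succ).trans (hlim (n + 1))
  have hnear : X ^ n ∣ T (a n) - T f := (pow_dvd_pow X n.le_succ).trans
    (X_pow_succ_dvd_X_pow_mul_aeval_sub hk p (dvd_sub_comm.mp (hlim n)))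
  simpa only [sub_add_sub_cancel] using dvd_add hfar hnear

end FixedPoint

theorem derivative_eq_neg_sq_mul_of_mul_eq_one {f g : A⟦X⟧} (h : f * g = 1) :
    d⁄dX A g = -g ^ 2 * d⁄dX A f := by
  have hd : f * d⁄dX A g + g * d⁄dX A f = 0 := by
    simpa [smul_eq_mul] using congrArg (d⁄dX A) h
  linear_combination g * hd - d⁄dX A g * h

theorem constantCoeff_polynomial_aeval {w : A⟦X⟧} (hw : constantCoeff w = 0)
    (p : Polynomial A) :
    constantCoeff (Polynomial.aeval w p) = p.coeff 0 := by
  rw [Polynomial.aeval_def, Polynomial.hom_eval₂, hw, Polynomial.coeff_zero_eq_eval_zero]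
  congr 1

section LagrangeBurmann

variable {w φ ψ : A⟦X⟧}

theorem derivative_eq_add_X_mul_derivative (hw : w = X * φ) :
    d⁄dX A w = φ + X * d⁄dX A φ := by
  rw [hw, Derivation.leibniz, derivative_X, smul_eq_mul, smul_eq_mul]
  ring

variable (hw : w = X * φ) (hψ : φ * ψ = 1)
include hw hψ

theorem coeff_zero_derivative_mul : coeff 0 (d⁄dX A w * ψ) = 1 := by
  rw [derivative_eq_add_X_mul_derivative hw, add_mul, mul_assoc, map_add, hψ, coeff_zero_X_mul,
    add_zero, coeff_zero_one]

theorem coeff_succ_derivative_mul_pow [IsAddTorsionFree A] (j : ℕ) :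
    coeff (j + 1) (d⁄dX A w * ψ ^ (j + 2)) = 0 := by
  have hpow : d⁄dX A (ψ ^ (j + 1)) = (j + 1) * ψ ^ j * d⁄dX A ψ := by
    rw [Derivation.leibniz_pow, smul_eq_mul, nsmul_eq_mul]
    push_cast
    ring_nf
  have key : ((j + 1 : ℕ) : A⟦X⟧) * (d⁄dX A w * ψ ^ (j + 2)) =
      ((j + 1 : ℕ) : A⟦X⟧) * ψ ^ (j + 1) - X * d⁄dX A (ψ ^ (j + 1)) := by
    rw [hpow, derivative_eq_neg_sq_mul_of_mul_eq_one hψ, derivative_eq_add_X_mul_derivative hw]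
    push_cast
    linear_combination ((j + 1) * ψ ^ (j + 1) : A⟦X⟧) * hψ
  have hcoeff := congrArg (coeff (j + 1)) key
  rw [← map_natCast (C (R := A)), map_sub, coeff_C_mul, coeff_C_mul, coeff_succ_X_mul,
    coeff_derivative, sub_eq_zero_of_eq (by push_cast; ring)] at hcoeff
  rw [← nsmul_eq_zero_iff_right (j.succ_ne_zero), nsmul_eq_mul]
  exact hcoeff

theorem coeff_derivative_mul_pow_succ [IsAddTorsionFree A] (m : ℕ) :
    coeff m (d⁄dX A w * ψ ^ (m + 1)) = if m = 0 then 1 else 0 := by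
  rcases m with _ | j
  · simpa using coeff_zero_derivative_mul hw hψ
  · simpa using coeff_succ_derivative_mul_pow hw hψ j

theorem coeff_X_pow_mul_derivative_mul [IsAddTorsionFree A] (n k : ℕ) :
    coeff n (X ^ k * (d⁄dX A w * ψ ^ (n + 1) * φ ^ k)) = if k = n then 1 else 0 := by
  rw [coeff_X_pow_mul']
  by_cases hkn : k ≤ n
  · have hcancel : ψ ^ (n + 1) * φ ^ k = ψ ^ (n - k + 1) := by
      rw [show n + 1 = n - k + 1 + k by omega, pow_add, mul_assoc, ← mul_pow, mul_comm ψ, hψ,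
        one_pow, mul_one]
    rw [if_pos hkn, mul_assoc, hcancel, coeff_derivative_mul_pow_succ hw hψ]
    exact if_congr (by omega) rfl rfl
  · rw [if_neg hkn, if_neg (by omega)]

theorem coeff_derivative_mul_eq_coeff_pow [IsAddTorsionFree A] {p : Polynomial A}
    (hφ : φ = Polynomial.aeval w p) (n : ℕ) :
    coeff n (d⁄dX A w * ψ) = (p ^ n).coeff n := by
  set N := (p ^ n).natDegree + n + 1 with hN
  have hexpand : d⁄dX A w * ψ =
      ∑ i ∈ range N, (p ^ n).coeff i • (X ^ i * (d⁄dX A w * ψ ^ (n + 1) * φ ^ i)) := by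
    have hφn : φ ^ n = ∑ i ∈ range N, (p ^ n).coeff i • w ^ i := by
      rw [hφ, ← map_pow, Polynomial.aeval_eq_sum_range' (n := N) (by omega)]
    have hwi (i : ℕ) : w ^ i = X ^ i * φ ^ i := by rw [hw, mul_pow]
    calc d⁄dX A w * ψ = d⁄dX A w * ψ ^ (n + 1) * φ ^ n := by
          rw [show d⁄dX A w * ψ ^ (n + 1) * φ ^ n = d⁄dX A w * ψ * (φ * ψ) ^ n by ring, hψ,
            one_pow, mul_one]
      _ = _ := by
          rw [hφn, mul_sum]
          refine sum_congr rfl fun i _ => ?_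
          rw [mul_smul_comm, hwi]
          ring_nf
  rw [hexpand, map_sum]
  simp_rw [smul_eq_C_mul, coeff_C_mul, coeff_X_pow_mul_derivative_mul hw hψ, mul_ite, mul_one,
    mul_zero]
  rw [sum_ite_eq' (range N) n, if_pos (mem_range.mpr (by omega))]

end LagrangeBurmann

noncomputable def powDiag (p : Polynomial A) : A⟦X⟧ :=
  mk fun n => (p ^ n).coeff n

theorem X_mul_derivative_eq_mul_powDiag_of_isAddTorsionFree [IsAddTorsionFree A]
    {p : Polynomial A} (hp : IsUnit (p.coeff 0)) {w : A⟦X⟧}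
    (hw : w = X * Polynomial.aeval w p) : X * d⁄dX A w = w * powDiag p := by
  have hw0 : constantCoeff w = 0 := by rw [hw, map_mul, constantCoeff_X, zero_mul]
  obtain ⟨ψ, hψ⟩ := (isUnit_iff_constantCoeff.mpr
    (by rwa [constantCoeff_polynomial_aeval hw0])).exists_right_inv
  have hdiag : powDiag p = d⁄dX A w * ψ := ext fun n => by
    rw [powDiag, coeff_mk, coeff_derivative_mul_eq_coeff_pow hw hψ rfl]
  calc X * d⁄dX A w = X * Polynomial.aeval w p * (d⁄dX A w * ψ) := by
        linear_combination (-(X * d⁄dX A w)) * hψ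
    _ = w * powDiag p := by rw [← hw, hdiag]

section Map

variable {B : Type*} [CommRing B] (f : A →+* B)

theorem map_derivative (g : A⟦X⟧) : map f (d⁄dX A g) = d⁄dX B (map f g) := by
  ext n
  simp [coeff_derivative]

theorem map_polynomial_aeval (g : A⟦X⟧) (p : Polynomial A) :
    map f (Polynomial.aeval g p) = Polynomial.aeval (map f g) (p.map f) := by
  rw [Polynomial.aeval_def, Polynomial.aeval_def, Polynomial.hom_eval₂, Polynomial.eval₂_map]
  congr 1
  ext
  simp

theorem map_powDiag (p : Polynomial A) : map f (powDiag p) = powDiag (p.map f) := by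
  ext n
  simp [powDiag, ← Polynomial.map_pow]

end Map

theorem X_mul_derivative_eq_mul_powDiag {p : Polynomial A} (hp : p.coeff 0 = 1) {w : A⟦X⟧}
    (hw : w = X * Polynomial.aeval w p) : X * d⁄dX A w = w * powDiag p := by
  let p₀ : Polynomial (MvPolynomial ℕ ℤ) :=
    1 + ∑ i ∈ range p.natDegree, Polynomial.C (MvPolynomial.X i) * Polynomial.X ^ (i + 1)
  let f : MvPolynomial ℕ ℤ →+* A :=
    MvPolynomial.eval₂Hom (Int.castRingHom A) fun i => p.coeff (i + 1)
  have hp₀ : p₀.coeff 0 = 1 := by simp [p₀]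
  have hmap : p₀.map f = p := by
    conv_rhs => rw [p.as_sum_range_C_mul_X_pow, sum_range_succ', hp]
    simp [p₀, Polynomial.map_sum, f, add_comm]
  obtain ⟨w₀, hw₀⟩ := exists_eq_X_pow_mul_aeval one_ne_zero p₀
  rw [pow_one] at hw₀
  have h₀ := X_mul_derivative_eq_mul_powDiag_of_isAddTorsionFree (hp₀ ▸ isUnit_one) hw₀
  have hw' : map f w₀ = w := by
    refine eq_of_eq_X_pow_mul_aeval one_ne_zero p ?_ (by rwa [pow_one])
    conv_lhs => rw [hw₀]
    rw [pow_one, map_mul, map_X, map_polynomial_aeval, hmap]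
  simpa [map_derivative, map_powDiag, hmap, hw'] using congrArg (map f) h₀

theorem derivative_expand {k : ℕ} (hk : k ≠ 0) (f : A⟦X⟧) :
    d⁄dX A (expand k hk f) = (k : A⟦X⟧) * X ^ (k - 1) * expand k hk (d⁄dX A f) := by
  rw [expand_apply, expand_apply, derivative_subst (HasSubst.X_pow hk), Derivation.leibniz_pow,
    derivative_X, smul_eq_mul, nsmul_eq_mul]
  ring

end PowerSeries

theorem Polynomial.coeff_sum_C_mul_X_pow_pow {R ι : Type*} [CommRing R] [Fintype ι]
    [DecidableEq ι] (a : ι → R) (e : ι → ℕ) (n m : ℕ) :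
    ((∑ i, Polynomial.C (a i) * Polynomial.X ^ e i) ^ n).coeff m =
      ∑ k ∈ (piAntidiag univ n).filter (fun k => ∑ i, e i * k i = m),
        (Nat.multinomial univ k : R) * ∏ i, a i ^ k i := by
  rw [sum_pow_eq_sum_piAntidiag, finsetSum_coeff, sum_filter]
  refine sum_congr rfl fun k _ => ?_
  have hterm : (Nat.multinomial univ k : Polynomial R) *
        ∏ i, (Polynomial.C (a i) * Polynomial.X ^ e i) ^ k i =
      Polynomial.C ((Nat.multinomial univ k : R) * ∏ i, a i ^ k i) *
        Polynomial.X ^ (∑ i, e i * k i) := by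
    simp only [mul_pow, prod_mul_distrib, ← pow_mul, prod_pow_eq_pow_sum, map_mul, map_prod,
      map_pow, map_natCast]
    ring
  rw [hterm, coeff_C_mul_X_pow]
  exact if_congr eq_comm rfl rfl

noncomputable def curvePolynomial {R : Type*} [CommRing R] (b1 b2 b3 b4 b5 : R) :
    Polynomial R :=
  ∑ i : Fin 6, Polynomial.C (![1, b1, b2, b3, b4, b5] i) * Polynomial.X ^ (i : ℕ)

section CurvePolynomial

variable {R : Type*} [CommRing R] (b1 b2 b3 b4 b5 : R)

theorem aeval_curvePolynomial (u : R⟦X⟧) :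
    Polynomial.aeval u (curvePolynomial b1 b2 b3 b4 b5) =
      1 + C b1 * u + C b2 * u ^ 2 + C b3 * u ^ 3 + C b4 * u ^ 4 + C b5 * u ^ 5 := by
  simp [curvePolynomial, Fin.sum_univ_six, Polynomial.aeval_C]

theorem coeff_zero_curvePolynomial : (curvePolynomial b1 b2 b3 b4 b5).coeff 0 = 1 := by
  simp [curvePolynomial, Fin.sum_univ_six]

theorem coeff_pow_curvePolynomial (n : ℕ) :
    ((curvePolynomial b1 b2 b3 b4 b5) ^ n).coeff n = Dcoef b1 b2 b3 b4 b5 n := by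
  rw [curvePolynomial, Polynomial.coeff_sum_C_mul_X_pow_pow, Dcoef]
  refine sum_congr ?_ fun k _ => ?_
  · ext k
    simp only [mem_filter, mem_piAntidiag, Fintype.mem_piFinset, mem_range, mem_univ,
      implies_true, and_true, Fin.sum_univ_six, Fin.forall_fin_succ, IsEmpty.forall_iff,
      Fin.isValue, Fin.coe_ofNat_eq_mod, Nat.reduceMod, Fin.succ_zero_eq_one, Fin.succ_one_eq_two,
      Fin.reduceSucc]
    omega
  · simp [Fin.prod_univ_six]

theorem expand_powDiag_curvePolynomial :
    expand 2 two_ne_zero (powDiag (curvePolynomial b1 b2 b3 b4 b5)) = DSeries b1 b2 b3 b4 b5 := by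
  ext m
  rw [coeff_expand, DSeries, coeff_mk]
  split_ifs
  · rw [powDiag, coeff_mk, coeff_pow_curvePolynomial]
  · rfl

end CurvePolynomial

theorem stmt2 {R : Type*} [CommRing R] (b1 b2 b3 b4 b5 : R) (u : PowerSeries R)
    (hu : SatisfiesCurveEqAtInfinity b1 b2 b3 b4 b5 u) :
    X * derivative R u = 2 * u * DSeries b1 b2 b3 b4 b5 ∧
    Dcoef b1 b2 b3 b4 b5 0 = 1 := by
  set P := curvePolynomial b1 b2 b3 b4 b5
  have hu' : u = X ^ 2 * Polynomial.aeval u P := by rw [aeval_curvePolynomial]; exact hu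
  obtain ⟨w, hw⟩ := exists_eq_X_pow_mul_aeval one_ne_zero P
  rw [pow_one] at hw
  have huw : u = expand 2 two_ne_zero w := by
    refine eq_of_eq_X_pow_mul_aeval two_ne_zero P hu' ?_
    conv_lhs => rw [hw]
    rw [map_mul, expand_X, Polynomial.aeval_algHom_apply]
  refine ⟨?_, by simpa using (coeff_pow_curvePolynomial b1 b2 b3 b4 b5 0).symm⟩
  calc X * d⁄dX R u = 2 * expand 2 two_ne_zero (X * d⁄dX R w) := by
        rw [huw, derivative_expand, map_mul, expand_X]
        push_cast
        ring
    _ = 2 * u * DSeries b1 b2 b3 b4 b5 := by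
        rw [X_mul_derivative_eq_mul_powDiag (coeff_zero_curvePolynomial ..) hw, map_mul, ← huw,
          expand_powDiag_curvePolynomial]
        ring
end

section
/- Fix real numbers b1,…,b5. There exists ε > 0 such that for every real t0 with 0 < |t0| < ε, if u0 denotes the unique root of f_{t0} in the closed unit disc (which is real with 0 < u0 < 1), then Jensen's formula gives log u0 = 2·log|t0| − (1/(2π))·∫_0^{2π} log‖1 − g_{t0}(e^{iθ})‖ dθ. -/
/-!
On the unit circle `‖1 - g_{t₀}(w)‖ = ‖f_{t₀}(w)‖`, so the integral is `2π` times the logarithmic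
Mahler measure of `f_{t₀}`, i.e. `log ‖leadingCoeff‖ + ∑ log⁺ ‖a‖` over its roots `a`. For small
`t₀` we have `f_{t₀}' ≈ 1` on `[0, 1]`, so `u₀` is a simple root; dividing it off leaves a
polynomial `q` with no roots in the closed unit disc, whose Mahler measure is `‖q(0)‖` by the root
factorisation. Since `f_{t₀}(0) = -u₀ q(0)` and `‖f_{t₀}(0)‖ = t₀²`, this gives the formula.
-/

open Real

/-- The polynomial function `f_{t₀}(u) = u − t₀²(1 + b₁u + b₂u² + b₃u³ + b₄u⁴ + b₅u⁵)`. -/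
noncomputable def fpol (b1 b2 b3 b4 b5 t0 : ℝ) (u : ℂ) : ℂ :=
  u - (t0 : ℂ) ^ 2 * (1 + (b1 : ℂ) * u + (b2 : ℂ) * u ^ 2 + (b3 : ℂ) * u ^ 3
      + (b4 : ℂ) * u ^ 4 + (b5 : ℂ) * u ^ 5)

/-- `g_{t₀}(w) = t₀²(w⁻¹ + b₁ + b₂w + b₃w² + b₄w³ + b₅w⁴)`. -/
noncomputable def gfun (b1 b2 b3 b4 b5 t0 : ℝ) (w : ℂ) : ℂ :=
  (t0 : ℂ) ^ 2 * (w⁻¹ + (b1 : ℂ) + (b2 : ℂ) * w + (b3 : ℂ) * w ^ 2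
      + (b4 : ℂ) * w ^ 3 + (b5 : ℂ) * w ^ 4)

open Polynomial

namespace Polynomial

theorem mahlerMeasure_eq_norm_eval_zero {p : ℂ[X]} (h : ∀ a ∈ p.roots, 1 ≤ ‖a‖) :
    p.mahlerMeasure = ‖p.eval 0‖ := by
  have norm_prod (s : Multiset ℂ) : ‖s.prod‖ = (s.map norm).prod :=
    map_multiset_prod (normHom : ℂ →*₀ ℝ) s
  rw [mahlerMeasure_eq_leadingCoeff_mul_prod_roots, (IsAlgClosed.splits p).eval_eq_prod_roots,
    norm_mul, norm_prod, Multiset.map_map]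
  congr 2
  exact Multiset.map_congr rfl fun a ha => by simp [max_eq_right (h a ha)]

theorem logMahlerMeasure_eq_log_norm_eval_zero_sub_log_norm {p : ℂ[X]} {u : ℂ} (hu0 : u ≠ 0)
    (hu : ‖u‖ ≤ 1) (hroot : p.IsRoot u) (hsimple : p.derivative.eval u ≠ 0)
    (huniq : ∀ z : ℂ, ‖z‖ ≤ 1 → p.IsRoot z → z = u) :
    p.logMahlerMeasure = log ‖p.eval 0‖ - log ‖u‖ := by
  set q := p /ₘ (X - C u)
  have hpq : (X - C u) * q = p := mul_divByMonic_eq_iff_isRoot.mpr hroot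
  have hqu : q.eval u ≠ 0 := by
    simpa [← hpq, derivative_mul] using hsimple
  have hq0 : q ≠ 0 := by rintro h; simp [h] at hqu
  have hq_roots : ∀ a ∈ q.roots, 1 ≤ ‖a‖ := by
    intro a ha
    by_contra! hlt
    have hqa : q.IsRoot a := (mem_roots hq0).mp ha
    obtain rfl : a = u := huniq a hlt.le (by simp [← hpq, hqa.eq_zero])
    exact hqu hqa
  have hq_eval : q.eval 0 ≠ 0 := fun h => hu0 (huniq 0 (by simp) (by simp [← hpq, h])).symm
  rw [← hpq, logMahlerMeasure_mul_eq_add_logMahlerMeasure (mul_ne_zero (X_sub_C_ne_zero u) hq0),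
    logMahlerMeasure_X_sub_C, (posLog_eq_zero_iff _).mpr (by simpa using hu),
    logMahlerMeasure_eq_log_MahlerMeasure, mahlerMeasure_eq_norm_eval_zero hq_roots, eval_mul]
  simp [Real.log_mul (norm_ne_zero_iff.mpr hu0) (norm_ne_zero_iff.mpr hq_eval)]

end Polynomial

section

variable (b1 b2 b3 b4 b5 t0 : ℝ)

noncomputable def fpolPolynomial : ℂ[X] :=
  X - C ((t0 : ℂ) ^ 2) * (1 + C (b1 : ℂ) * X + C (b2 : ℂ) * X ^ 2 + C (b3 : ℂ) * X ^ 3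
    + C (b4 : ℂ) * X ^ 4 + C (b5 : ℂ) * X ^ 5)

@[simp]
theorem eval_fpolPolynomial (z : ℂ) :
    (fpolPolynomial b1 b2 b3 b4 b5 t0).eval z = fpol b1 b2 b3 b4 b5 t0 z := by
  simp [fpolPolynomial, fpol]

theorem eval_ofReal_derivative_fpolPolynomial (u : ℝ) :
    (fpolPolynomial b1 b2 b3 b4 b5 t0).derivative.eval (u : ℂ) =
      ((1 - t0 ^ 2 * (b1 + 2 * b2 * u + 3 * b3 * u ^ 2 + 4 * b4 * u ^ 3 + 5 * b5 * u ^ 4) : ℝ)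
        : ℂ) := by
  simp only [fpolPolynomial, derivative_sub, derivative_X, derivative_C_mul, derivative_add,
    derivative_one, derivative_X_pow, eval_sub, eval_add, eval_mul, eval_one, eval_C, eval_X,
    eval_pow, eval_zero]
  push_cast
  ring

theorem eval_derivative_fpolPolynomial_ne_zero {u : ℝ} (hu0 : 0 ≤ u) (hu1 : u ≤ 1)
    (ht : t0 ^ 2 * (|b1| + 2 * |b2| + 3 * |b3| + 4 * |b4| + 5 * |b5|) < 1) :
    (fpolPolynomial b1 b2 b3 b4 b5 t0).derivative.eval (u : ℂ) ≠ 0 := by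
  have hbound : b1 + 2 * b2 * u + 3 * b3 * u ^ 2 + 4 * b4 * u ^ 3 + 5 * b5 * u ^ 4 ≤
      |b1| + 2 * |b2| + 3 * |b3| + 4 * |b4| + 5 * |b5| := by
    have key (b : ℝ) (n : ℕ) : b * u ^ n ≤ |b| :=
      calc b * u ^ n ≤ |b| * u ^ n := mul_le_mul_of_nonneg_right (le_abs_self b) (pow_nonneg hu0 n)
        _ ≤ |b| := mul_le_of_le_one_right (abs_nonneg b) (pow_le_one₀ hu0 hu1)
    linarith [le_abs_self b1, pow_one u ▸ key b2 1, key b3 2, key b4 3, key b5 4]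
  rw [eval_ofReal_derivative_fpolPolynomial, Complex.ofReal_ne_zero]
  nlinarith [sq_nonneg t0]

theorem mul_one_sub_gfun {w : ℂ} (hw : w ≠ 0) :
    w * (1 - gfun b1 b2 b3 b4 b5 t0 w) = fpol b1 b2 b3 b4 b5 t0 w := by
  simp only [gfun, fpol]
  linear_combination (-(t0 : ℂ) ^ 2) * mul_inv_cancel₀ hw

theorem integral_log_norm_one_sub_gfun :
    ∫ θ in (0 : ℝ)..(2 * π),
        Real.log ‖(1 : ℂ) - gfun b1 b2 b3 b4 b5 t0 (Complex.exp (θ * Complex.I))‖ =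
      2 * π * (fpolPolynomial b1 b2 b3 b4 b5 t0).logMahlerMeasure := by
  have hcircle (θ : ℝ) : ‖(1 : ℂ) - gfun b1 b2 b3 b4 b5 t0 (Complex.exp (θ * Complex.I))‖ =
      ‖(fpolPolynomial b1 b2 b3 b4 b5 t0).eval (circleMap 0 1 θ)‖ := by
    rw [eval_fpolPolynomial, circleMap_zero, Complex.ofReal_one, one_mul,
      ← mul_one_sub_gfun _ _ _ _ _ _ (Complex.exp_ne_zero _), norm_mul,
      Complex.norm_exp_ofReal_mul_I, one_mul]
  simp_rw [hcircle, logMahlerMeasure_def, circleAverage_def, smul_eq_mul]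
  field_simp

end

theorem stmt7 (b1 b2 b3 b4 b5 : ℝ) :
    ∃ ε > (0 : ℝ), ∀ t0 : ℝ, 0 < |t0| → |t0| < ε →
      ∀ u0 : ℝ, 0 < u0 → u0 < 1 → fpol b1 b2 b3 b4 b5 t0 (u0 : ℂ) = 0 →
        (∀ z : ℂ, ‖z‖ ≤ 1 → fpol b1 b2 b3 b4 b5 t0 z = 0 → z = (u0 : ℂ)) →
        Real.log u0 = 2 * Real.log |t0| -
          (1 / (2 * π)) * ∫ θ in (0 : ℝ)..(2 * π),
            Real.log ‖(1 : ℂ) - gfun b1 b2 b3 b4 b5 t0 (Complex.exp (θ * Complex.I))‖ := by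
  set M := |b1| + 2 * |b2| + 3 * |b3| + 4 * |b4| + 5 * |b5|
  have hM : 0 ≤ M := by positivity
  refine ⟨1 / (1 + M), by positivity, fun t0 _ htε u0 hu0 hu1 hroot huniq => ?_⟩
  have hsmall : t0 ^ 2 * M < 1 := by
    rw [lt_div_iff₀ (by positivity)] at htε
    nlinarith [sq_abs t0, mul_nonneg (abs_nonneg t0) hM]
  have hlogMahler := logMahlerMeasure_eq_log_norm_eval_zero_sub_log_norm
    (p := fpolPolynomial b1 b2 b3 b4 b5 t0) (u := u0) (by exact_mod_cast hu0.ne')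
    (by simpa [abs_of_pos hu0] using hu1.le) (by simpa [IsRoot] using hroot)
    (eval_derivative_fpolPolynomial_ne_zero _ _ _ _ _ _ hu0.le hu1.le hsmall)
    (fun z hz hzroot => huniq z hz (by simpa using hzroot))
  have heval_zero : ‖(fpolPolynomial b1 b2 b3 b4 b5 t0).eval 0‖ = |t0| ^ 2 := by
    simp [fpol]
  rw [integral_log_norm_one_sub_gfun, hlogMahler, heval_zero, Real.log_pow,
    Complex.norm_real, Real.norm_of_nonneg hu0.le]
  field_simp
  ring
end

section
/- Fix real numbers b1,…,b5. There exists ε > 0 such that for every real t0 with 0 < |t0| < ε, the series ∑_{n≥1} (t0^{2n}/n)·D(n) converges and (1/(2π))·∫_0^{2π} log‖1 − g_{t0}(e^{iθ})‖ dθ = −∑_{n≥1} (t0^{2n}/n)·D(n). -/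
/-!
On the unit circle `g_{t₀}(e^{iθ}) = t₀² ∑ⱼ cⱼ e^{i eⱼ θ}` with exponents `eⱼ ∈ {-1,…,4}`. By the
multinomial theorem the mean of `gⁿ` over the circle keeps exactly the multi-indices `k` with
`∑ kⱼ eⱼ = 0`, and these are the index tuples of `D(n)`; so the mean of `gⁿ` is `t₀^{2n} D(n)`.
Once `t₀² ∑ |cⱼ| < 1`, the series `-log (1 - g) = ∑ gⁿ / n` is dominated by a geometric series
and can be integrated termwise; the real part of `log (1 - g)` is `log ‖1 - g‖`.
-/

open Real Finset

section LaurentOnCircle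

open Complex

lemma integral_exp_int_mul_mul_I (m : ℤ) :
    ∫ θ in (0 : ℝ)..2 * π, exp (m * θ * I) = if m = 0 then (2 * π : ℂ) else 0 := by
  split_ifs with hm
  · simp [hm]
  have hc : (m : ℂ) * I ≠ 0 := by simp [hm]
  simp_rw [mul_right_comm _ _ I]
  rw [integral_exp_mul_complex hc]
  push_cast
  rw [mul_zero, Complex.exp_zero, mul_assoc, mul_comm I, exp_int_mul_two_pi_mul_I, sub_self,
    zero_div]

variable {ι : Type*} [Fintype ι]

lemma norm_sum_mul_exp_le (c : ι → ℂ) (e : ι → ℤ) (θ : ℝ) :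
    ‖∑ j, c j * exp (e j * θ * I)‖ ≤ ∑ j, ‖c j‖ := by
  refine (norm_sum_le _ _).trans (sum_le_sum fun j _ => ?_)
  rw [norm_mul, show (e j : ℂ) * θ * I = ((e j * θ : ℝ) : ℂ) * I by push_cast; ring,
    norm_exp_ofReal_mul_I, mul_one]

lemma integral_sum_mul_exp_pow [DecidableEq ι] (c : ι → ℂ) (e : ι → ℤ) (n : ℕ) :
    ∫ θ in (0 : ℝ)..2 * π, (∑ j, c j * exp (e j * θ * I)) ^ n =
      2 * π * ∑ k ∈ (piAntidiag univ n).filter (fun k => ∑ j, (k j : ℤ) * e j = 0),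
        (Nat.multinomial univ k : ℂ) * ∏ j, c j ^ k j := by
  have expand : ∀ θ : ℝ, (∑ j, c j * exp (e j * θ * I)) ^ n =
      ∑ k ∈ piAntidiag univ n, (Nat.multinomial univ k * ∏ j, c j ^ k j) *
        exp ((∑ j, (k j : ℤ) * e j : ℤ) * θ * I) := by
    intro θ
    rw [sum_pow_eq_sum_piAntidiag]
    refine sum_congr rfl fun k _ => ?_
    simp_rw [mul_assoc, mul_pow, prod_mul_distrib, ← Complex.exp_nat_mul, ← Complex.exp_sum]
    push_cast
    simp_rw [sum_mul]
    congr 3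
    exact sum_congr rfl fun _ _ => by ring
  simp_rw [expand]
  rw [intervalIntegral.integral_finsetSum fun k _ =>
    (by fun_prop : Continuous _).intervalIntegrable _ _]
  simp_rw [intervalIntegral.integral_const_mul, integral_exp_int_mul_mul_I, mul_ite, mul_zero]
  rw [sum_ite, sum_const_zero, add_zero, mul_sum]
  exact sum_congr rfl fun k _ => mul_comm _ _

end LaurentOnCircle

section LogSeries

open MeasureTheory

variable {f : ℝ → ℂ} {r : ℝ}

lemma hasSum_integral_pow_div (hf : Continuous f) (hr : r < 1) (hfr : ∀ θ, ‖f θ‖ ≤ r)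
    (a b : ℝ) :
    HasSum (fun n : ℕ => ∫ θ in a..b, f θ ^ (n + 1) / (n + 1))
      (∫ θ in a..b, -Complex.log (1 - f θ)) := by
  have hr0 : 0 ≤ r := (norm_nonneg _).trans (hfr 0)
  have hterm (n : ℕ) (θ : ℝ) : ‖f θ ^ (n + 1) / (n + 1)‖ ≤ r ^ (n + 1) := by
    rw [norm_div, norm_pow, ← Nat.cast_add_one, Complex.norm_natCast]
    calc ‖f θ‖ ^ (n + 1) / (n + 1 : ℕ) ≤ ‖f θ‖ ^ (n + 1) :=
          div_le_self (by positivity) (by simp)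
      _ ≤ r ^ (n + 1) := pow_le_pow_left₀ (norm_nonneg _) (hfr θ) _
  exact intervalIntegral.hasSum_integral_of_dominated_convergence (fun n _ => r ^ (n + 1))
    (fun n => by fun_prop) (fun n => ae_of_all _ fun θ _ => hterm n θ)
    (ae_of_all _ fun _ _ => (summable_nat_add_iff 1).2 (summable_geometric_of_lt_one hr0 hr))
    intervalIntegrable_const
    (ae_of_all _ fun θ _ => Complex.hasSum_taylorSeries_neg_log' ((hfr θ).trans_lt hr))

lemma re_integral_neg_log_one_sub (hf : Continuous f) (hfr : ∀ θ, ‖f θ‖ < 1) (a b : ℝ) :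
    (∫ θ in a..b, -Complex.log (1 - f θ)).re = -∫ θ in a..b, Real.log ‖1 - f θ‖ := by
  have hslit : ∀ θ, 1 - f θ ∈ Complex.slitPlane := fun θ => Or.inl <| by
    simpa using (Complex.re_le_norm (f θ)).trans_lt (hfr θ)
  have hcont : Continuous fun θ => -Complex.log (1 - f θ) :=
    (continuous_iff_continuousAt.2 fun θ =>
      (continuousAt_clog (hslit θ)).comp (f := fun θ => 1 - f θ)
        (continuous_const.sub hf).continuousAt).neg
  rw [← RCLike.re_eq_complex_re,
    ← intervalIntegral.intervalIntegral_re (hcont.intervalIntegrable a b),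
    ← intervalIntegral.integral_neg]
  simp [Complex.log_re]

lemma hasSum_re_integral_pow_div (hf : Continuous f) (hr : r < 1)
    (hfr : ∀ θ, ‖f θ‖ ≤ r) (a b : ℝ) :
    HasSum (fun n : ℕ => (∫ θ in a..b, f θ ^ (n + 1)).re / (n + 1))
      (-∫ θ in a..b, Real.log ‖1 - f θ‖) := by
  rw [← re_integral_neg_log_one_sub hf (fun θ => (hfr θ).trans_lt hr)]
  convert Complex.hasSum_re (hasSum_integral_pow_div hf hr hfr a b) using 2 with n
  rw [intervalIntegral.integral_div, ← Complex.ofReal_natCast, ← Complex.ofReal_one,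
    ← Complex.ofReal_add, Complex.div_ofReal_re]

end LogSeries

section LaurentForm

open Complex

variable (b1 b2 b3 b4 b5 : ℝ)

noncomputable def gfunCoeff : Fin 6 → ℂ := ![1, b1, b2, b3, b4, b5]

def gfunExponent : Fin 6 → ℤ := ![-1, 0, 1, 2, 3, 4]

lemma gfun_exp_mul_I (t0 θ : ℝ) :
    gfun b1 b2 b3 b4 b5 t0 (exp (θ * I)) =
      t0 ^ 2 * ∑ j, gfunCoeff b1 b2 b3 b4 b5 j * exp (gfunExponent j * θ * I) := by
  simp_rw [mul_assoc _ (θ : ℂ), exp_int_mul]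
  simp [gfun, gfunCoeff, gfunExponent, Fin.sum_univ_six]

lemma filter_piAntidiag_gfunExponent (n : ℕ) :
    (piAntidiag univ n).filter (fun k : Fin 6 → ℕ => ∑ j, (k j : ℤ) * gfunExponent j = 0) =
      (Fintype.piFinset fun _ : Fin 6 => range (n + 1)).filter
        (fun k => (∑ i, k i) = n ∧ k 1 + 2 * k 2 + 3 * k 3 + 4 * k 4 + 5 * k 5 = n) := by
  ext k
  simp only [mem_filter, mem_piAntidiag, Fintype.mem_piFinset, mem_range, Fin.sum_univ_six,
    mem_univ, implies_true, and_true, gfunExponent, Fin.isValue, Int.reduceNeg,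
    Matrix.cons_val_zero, Matrix.cons_val_one, Matrix.cons_val, mul_neg, mul_one, mul_zero,
    add_zero, Order.lt_add_one_iff]
  constructor
  · rintro ⟨hsum, hbal⟩
    refine ⟨fun i => ?_, hsum, by omega⟩
    fin_cases i <;> simp only [Fin.zero_eta, Fin.mk_one, Fin.reduceFinMk, Fin.isValue] <;> omega
  · rintro ⟨-, hsum, hdeg⟩
    exact ⟨hsum, by omega⟩

lemma integral_gfun_exp_mul_I_pow (t0 : ℝ) (n : ℕ) :
    ∫ θ in (0 : ℝ)..2 * π, gfun b1 b2 b3 b4 b5 t0 (exp (θ * I)) ^ n =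
      ((t0 ^ (2 * n) * (2 * π) * Dcoef b1 b2 b3 b4 b5 n : ℝ) : ℂ) := by
  simp_rw [gfun_exp_mul_I, mul_pow, intervalIntegral.integral_const_mul, integral_sum_mul_exp_pow,
    filter_piAntidiag_gfunExponent, Dcoef, mul_sum]
  push_cast
  refine sum_congr rfl fun k _ => ?_
  simp only [gfunCoeff, Fin.prod_univ_six, Fin.isValue, Matrix.cons_val_zero, Matrix.cons_val_one,
    Matrix.cons_val, one_pow, one_mul, pow_mul]
  ring

end LaurentForm

theorem stmt8 (b1 b2 b3 b4 b5 : ℝ) :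
    ∃ ε > (0 : ℝ), ∀ t0 : ℝ, 0 < |t0| → |t0| < ε →
      HasSum (fun n : ℕ => t0 ^ (2 * (n + 1)) / (n + 1) * Dcoef b1 b2 b3 b4 b5 (n + 1))
        (-((1 / (2 * π)) * ∫ θ in (0 : ℝ)..(2 * π),
            Real.log ‖(1 : ℂ) - gfun b1 b2 b3 b4 b5 t0 (Complex.exp (θ * Complex.I))‖)) := by
  set M := ∑ j, ‖gfunCoeff b1 b2 b3 b4 b5 j‖
  have hM : 0 ≤ M := by positivity
  refine ⟨1 / (M + 1), by positivity, fun t0 _ ht0 => ?_⟩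
  have hr : t0 ^ 2 * M < 1 := by
    have h1 : |t0| * (M + 1) < 1 := (lt_div_iff₀ (by positivity)).1 ht0
    nlinarith [abs_nonneg t0, sq_abs t0]
  have hbound (θ : ℝ) : ‖gfun b1 b2 b3 b4 b5 t0 (Complex.exp (θ * Complex.I))‖ ≤ t0 ^ 2 * M := by
    rw [gfun_exp_mul_I, norm_mul, norm_pow, Complex.norm_real, norm_eq_abs, sq_abs]
    exact mul_le_mul_of_nonneg_left (norm_sum_mul_exp_le _ _ θ) (sq_nonneg t0)
  have hcont : Continuous fun θ : ℝ => gfun b1 b2 b3 b4 b5 t0 (Complex.exp (θ * Complex.I)) := by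
    simp_rw [gfun_exp_mul_I]
    fun_prop
  have hsum := (hasSum_re_integral_pow_div hcont hr hbound 0 (2 * π)).mul_left (1 / (2 * π))
  simp only [integral_gfun_exp_mul_I_pow, Complex.ofReal_re] at hsum
  rw [← mul_neg]
  refine hsum.congr_fun fun n => ?_
  field_simp
end

section
/- Let c ∈ ℚ_p[z] be a polynomial whose constant coefficient is y0^2 for some y0 ∈ ℚ_p with y0 ≠ 0. Then there exists a unique formal power series y ∈ ℚ_p[[z]] with constant coefficient y0 such that y^2 = c in ℚ_p[[z]]; moreover there exist real constants A and B such that for all n ≥ 0 the n-th coefficient a_n of y satisfies ‖a_n‖_p ≤ exp(A·n + B) (i.e., the p-adic valuations of the coefficients of y are bounded below by a linear polynomial in n, so y has positive radius of convergence). -/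
/-!
Comparing coefficients of `X ^ (n + 1)` in `y ^ 2 = c` gives
`2 y₀ aₙ₊₁ = cₙ₊₁ - ∑_{0 < i < n + 1} aᵢ aₙ₊₁₋ᵢ`, which determines the coefficients `aₙ` of `y`
recursively once `2 y₀ ≠ 0`; the only other square root, `-y`, has the wrong constant term.
For growth, the ultrametric inequality bounds the right-hand side by the largest of its terms,
so a bound `‖cₙ‖ ≤ ‖2 y₀‖² Mⁿ` propagates to `‖aₙ‖ ≤ ‖2 y₀‖ Mⁿ` by strong induction, the
normalisation `‖2 y₀‖` being exactly what makes the products `‖aᵢ‖ ‖aₙ₋ᵢ‖` fit the same bound.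
-/

open PowerSeries

namespace PowerSeries

theorem coeff_succ_sq {R : Type*} [CommSemiring R] (y : R⟦X⟧) (n : ℕ) :
    coeff (n + 1) (y ^ 2) = 2 * constantCoeff y * coeff (n + 1) y
      + ∑ i ∈ Finset.Ioo 0 (n + 1), coeff i y * coeff (n + 1 - i) y := by
  rw [sq, coeff_mul, Finset.Nat.sum_antidiagonal_eq_sum_range_succ_mk, Finset.sum_range_succ,
    Finset.range_eq_Ico, Finset.sum_eq_sum_Ico_succ_bot (Nat.succ_pos n),
    Finset.Ico_add_one_left_eq_Ioo]
  simp only [Nat.sub_zero, Nat.sub_self, coeff_zero_eq_constantCoeff]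
  ring

theorem eq_of_sq_eq_sq_of_constantCoeff_eq {R : Type*} [CommRing R] [IsDomain R] {y z : R⟦X⟧}
    (h : y ^ 2 = z ^ 2) (h₀ : constantCoeff y = constantCoeff z) (h₂ : 2 * constantCoeff y ≠ 0) :
    y = z := by
  refine (sq_eq_sq_iff_eq_or_eq_neg.mp h).resolve_right fun hyz => h₂ ?_
  have := congrArg constantCoeff hyz
  rw [map_neg, ← h₀] at this
  linear_combination this

section Field

variable {K : Type*} [Field K]

noncomputable def sqrtCoeff (c : K⟦X⟧) (y₀ : K) : ℕ → K
  | 0 => y₀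
  | n + 1 => (coeff (n + 1) c - ∑ i ∈ (Finset.Ioo 0 (n + 1)).attach,
      sqrtCoeff c y₀ i * sqrtCoeff c y₀ (n + 1 - i)) / (2 * y₀)
  decreasing_by
  · exact (Finset.mem_Ioo.mp i.2).2
  · have := (Finset.mem_Ioo.mp i.2).1; omega

theorem sqrtCoeff_succ (c : K⟦X⟧) (y₀ : K) (n : ℕ) :
    sqrtCoeff c y₀ (n + 1) = (coeff (n + 1) c - ∑ i ∈ Finset.Ioo 0 (n + 1),
      sqrtCoeff c y₀ i * sqrtCoeff c y₀ (n + 1 - i)) / (2 * y₀) := by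
  rw [sqrtCoeff, Finset.sum_attach _ fun i => sqrtCoeff c y₀ i * sqrtCoeff c y₀ (n + 1 - i)]

theorem constantCoeff_mk_sqrtCoeff (c : K⟦X⟧) (y₀ : K) :
    constantCoeff (mk (sqrtCoeff c y₀)) = y₀ := by
  rw [← coeff_zero_eq_constantCoeff_apply, coeff_mk, sqrtCoeff]

theorem mk_sqrtCoeff_sq {c : K⟦X⟧} {y₀ : K} (h₂ : 2 * y₀ ≠ 0) (hc : constantCoeff c = y₀ ^ 2) :
    mk (sqrtCoeff c y₀) ^ 2 = c := by
  ext (_ | n)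
  · rw [coeff_zero_eq_constantCoeff_apply, map_pow, constantCoeff_mk_sqrtCoeff,
      coeff_zero_eq_constantCoeff_apply, hc]
  · rw [coeff_succ_sq, constantCoeff_mk_sqrtCoeff]
    simp only [coeff_mk]
    rw [sqrtCoeff_succ, mul_div_cancel₀ _ h₂, sub_add_cancel]

theorem existsUnique_sq_eq {c : K⟦X⟧} {y₀ : K} (h₂ : 2 * y₀ ≠ 0) (hc : constantCoeff c = y₀ ^ 2) :
    ∃! y : K⟦X⟧, constantCoeff y = y₀ ∧ y ^ 2 = c := by
  refine ⟨mk (sqrtCoeff c y₀), ⟨constantCoeff_mk_sqrtCoeff c y₀, mk_sqrtCoeff_sq h₂ hc⟩, ?_⟩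
  rintro z ⟨hz₀, hz⟩
  refine eq_of_sq_eq_sq_of_constantCoeff_eq (hz.trans (mk_sqrtCoeff_sq h₂ hc).symm) ?_ (hz₀ ▸ h₂)
  rw [hz₀, constantCoeff_mk_sqrtCoeff]

end Field

section Ultrametric

variable {K : Type*} [NormedField K] [IsUltrametricDist K]
theorem norm_coeff_le_of_norm_coeff_sq_le {y : K⟦X⟧} (h₂ : 2 * constantCoeff y ≠ 0) {M : ℝ}
    (h : ∀ n, 0 < n → ‖coeff n (y ^ 2)‖ ≤ ‖2 * constantCoeff y‖ ^ 2 * M ^ n) :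
    ∀ n, 0 < n → ‖coeff n y‖ ≤ ‖2 * constantCoeff y‖ * M ^ n := by
  set s := ‖2 * constantCoeff y‖
  have hs : 0 < s := norm_pos_iff.mpr h₂
  have hM : 0 ≤ M := by
    refine nonneg_of_mul_nonneg_right ?_ (pow_pos hs 2)
    simpa using (norm_nonneg _).trans (h 1 one_pos)
  intro n hn
  induction n using Nat.strong_induction_on with
  | _ n ih =>
  obtain ⟨m, rfl⟩ := Nat.exists_eq_add_one_of_ne_zero hn.ne'
  set S := ∑ i ∈ Finset.Ioo 0 (m + 1), coeff i y * coeff (m + 1 - i) y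
  have hS : ‖S‖ ≤ s ^ 2 * M ^ (m + 1) := by
    refine IsUltrametricDist.norm_sum_le_of_forall_le_of_nonneg (by positivity) fun i hi => ?_
    obtain ⟨hi₀, hi⟩ := Finset.mem_Ioo.mp hi
    calc ‖coeff i y * coeff (m + 1 - i) y‖
        = ‖coeff i y‖ * ‖coeff (m + 1 - i) y‖ := norm_mul _ _
      _ ≤ (s * M ^ i) * (s * M ^ (m + 1 - i)) :=
          mul_le_mul (ih i hi hi₀) (ih _ (by omega) (by omega)) (norm_nonneg _) (by positivity)
      _ = s ^ 2 * M ^ (m + 1) := by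
          rw [mul_mul_mul_comm, ← pow_add, Nat.add_sub_cancel' hi.le, sq]
  have hrec : 2 * constantCoeff y * coeff (m + 1) y = coeff (m + 1) (y ^ 2) + -S := by
    rw [coeff_succ_sq, ← sub_eq_add_neg, add_sub_cancel_right]
  refine le_of_mul_le_mul_left ?_ hs
  calc s * ‖coeff (m + 1) y‖ = ‖coeff (m + 1) (y ^ 2) + -S‖ := by rw [← hrec, norm_mul]
    _ ≤ max ‖coeff (m + 1) (y ^ 2)‖ ‖-S‖ := IsUltrametricDist.norm_add_le_max _ _
    _ ≤ s ^ 2 * M ^ (m + 1) := max_le (h _ hn) (by rwa [norm_neg])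
    _ = s * (s * M ^ (m + 1)) := by ring

theorem exists_norm_coeff_le_exp_of_norm_coeff_sq_le_exp {y : K⟦X⟧} (h₂ : 2 * constantCoeff y ≠ 0)
    {A B : ℝ} (h : ∀ n : ℕ, ‖coeff n (y ^ 2)‖ ≤ Real.exp (A * n + B)) :
    ∃ A' B' : ℝ, ∀ n : ℕ, ‖coeff n y‖ ≤ Real.exp (A' * n + B') := by
  set s := ‖2 * constantCoeff y‖
  have hs : 0 < s := norm_pos_iff.mpr h₂
  obtain ⟨A', hA'⟩ : ∃ A', ∀ n : ℕ, 0 < n → A * n + B ≤ A' * n + 2 * Real.log s := by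
    refine ⟨A + max 0 (B - 2 * Real.log s), fun n hn => ?_⟩
    have : (1 : ℝ) ≤ n := by exact_mod_cast hn
    nlinarith [le_max_left 0 (B - 2 * Real.log s), le_max_right 0 (B - 2 * Real.log s)]
  have exp_eq : ∀ n k : ℕ, s ^ k * Real.exp A' ^ n = Real.exp (A' * n + k * Real.log s) := by
    intro n k
    rw [Real.exp_add, mul_comm A', Real.exp_nat_mul, Real.exp_nat_mul, Real.exp_log hs, mul_comm]
  have hM : ∀ n, 0 < n → ‖coeff n (y ^ 2)‖ ≤ s ^ 2 * Real.exp A' ^ n := fun n hn =>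
    (h n).trans <| by rw [exp_eq]; exact_mod_cast Real.exp_le_exp.mpr (hA' n hn)
  refine ⟨A', max (Real.log s) (Real.log ‖constantCoeff y‖), fun n => ?_⟩
  rcases Nat.eq_zero_or_pos n with rfl | hn
  · simpa [coeff_zero_eq_constantCoeff] using
      (Real.le_exp_log _).trans (Real.exp_le_exp.mpr (le_max_right _ _))
  calc ‖coeff n y‖ ≤ s * Real.exp A' ^ n := norm_coeff_le_of_norm_coeff_sq_le h₂ hM n hn
    _ = Real.exp (A' * n + Real.log s) := by simpa using exp_eq n 1
    _ ≤ _ := Real.exp_le_exp.mpr (by gcongr; exact le_max_left _ _)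

end Ultrametric

end PowerSeries

theorem stmt11 (p : ℕ) [Fact p.Prime] (c : Polynomial ℚ_[p]) (y0 : ℚ_[p])
    (hy0 : y0 ≠ 0) (hc : c.coeff 0 = y0 ^ 2) :
    (∃! y : PowerSeries ℚ_[p],
        constantCoeff y = y0 ∧ y ^ 2 = (c : PowerSeries ℚ_[p])) ∧
    ∀ y : PowerSeries ℚ_[p],
      constantCoeff y = y0 → y ^ 2 = (c : PowerSeries ℚ_[p]) →
        ∃ A B : ℝ, ∀ n : ℕ, ‖coeff n y‖ ≤ Real.exp (A * n + B) := by
  have h₂ : (2 : ℚ_[p]) * y0 ≠ 0 := mul_ne_zero two_ne_zero hy0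
  refine ⟨existsUnique_sq_eq h₂ (by rwa [Polynomial.constantCoeff_coe]), fun y hy hsq => ?_⟩
  refine exists_norm_coeff_le_exp_of_norm_coeff_sq_le_exp (hy ▸ h₂) (A := 0)
    (B := Real.log c.supNorm) fun n => ?_
  rw [hsq, Polynomial.coeff_coe, zero_mul, zero_add]
  exact (c.le_supNorm n).trans (Real.le_exp_log _)
end
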